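/- Let p be a prime, let s ≥ 1 be an integer, let a, d ∈ ℤ_p^× be p-adic units, let b, c ∈ ℤ_p, and let n, x, y be nonnegative integers with y ≤ n. Let A be the coefficient of X^x in the polynomial (p^s·c·X + d)^{n−y} (p·a·X + b)^{y} ∈ ℤ_p[X]. If x > n then A = 0; otherwise the p-adic valuation of A is at least x + (s−1)·max(0, x − y). -/

import Mathlib

open Polynomial

/-
Every coefficient of a power of a linear polynomial `u X + v` is divisible by the matching power
of `u`. Hence in the product the term of the Cauchy sum indexed by `i + j = x` is divisible by
`p ^ (s i + j)`, and it vanishes unless `j ≤ y`; then `i ≥ x - y` gives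
`s i + j = x + (s - 1) i ≥ x + (s - 1)(x - y)`. In `ℤ_p` divisibility by `p ^ N` is the norm
bound `‖A‖ ≤ p ^ (-N)`. The vanishing for `x > n` is a degree count.
-/

namespace Polynomial

variable {R : Type*} [CommSemiring R]

theorem coeff_C_mul_X_add_C_pow (u v : R) (k i : ℕ) :
    ((C u * X + C v) ^ k).coeff i = u ^ i * v ^ (k - i) * (k.choose i : R) := by
  have : (C u * X + C v) ^ k = ((X + C v) ^ k).comp (C u * X) := by
    simp only [pow_comp, add_comp, X_comp, C_comp]
  rw [this, comp_C_mul_X_coeff, coeff_X_add_C_pow]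
  ring

theorem pow_dvd_coeff_C_mul_X_add_C_pow (u v : R) (k i : ℕ) :
    u ^ i ∣ ((C u * X + C v) ^ k).coeff i := by
  rw [coeff_C_mul_X_add_C_pow, mul_assoc]
  exact dvd_mul_right _ _

theorem coeff_C_mul_X_add_C_pow_of_lt (u v : R) {k i : ℕ} (h : k < i) :
    ((C u * X + C v) ^ k).coeff i = 0 := by
  rw [coeff_C_mul_X_add_C_pow, Nat.choose_eq_zero_of_lt h, Nat.cast_zero, mul_zero]

theorem coeff_linear_pow_mul_linear_pow_of_lt (u v u' v' : R) {k l x : ℕ} (h : k + l < x) :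
    ((C u * X + C v) ^ k * (C u' * X + C v') ^ l).coeff x = 0 := by
  refine coeff_eq_zero_of_natDegree_lt (lt_of_le_of_lt ?_ h)
  simpa using natDegree_mul_le.trans <| add_le_add
    (natDegree_pow_le_of_le k natDegree_linear_le) (natDegree_pow_le_of_le l natDegree_linear_le)

theorem pow_dvd_coeff_linear_pow_mul_linear_pow (π a b c d : R) {s : ℕ} (hs : 1 ≤ s)
    (m y x : ℕ) :
    π ^ (x + (s - 1) * (x - y)) ∣
      ((C (π ^ s * c) * X + C d) ^ m * (C (π * a) * X + C b) ^ y).coeff x := by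
  rw [coeff_mul]
  refine Finset.dvd_sum ?_
  rintro ⟨i, j⟩ hij
  rw [Finset.HasAntidiagonal.mem_antidiagonal] at hij
  dsimp only
  rcases le_or_gt j y with hjy | hyj
  · have hexp : x + (s - 1) * (x - y) ≤ s * i + j := by
      obtain ⟨t, rfl⟩ := Nat.exists_eq_add_of_le' hs
      have : t * (x - y) ≤ t * i := Nat.mul_le_mul_left t (by omega)
      rw [Nat.add_sub_cancel, add_mul, one_mul]
      omega
    refine (pow_dvd_pow π hexp).trans ?_
    rw [pow_add]
    refine mul_dvd_mul ?_ ?_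
    · rw [pow_mul]
      exact (pow_dvd_pow_of_dvd (dvd_mul_right _ _) i).trans
        (pow_dvd_coeff_C_mul_X_add_C_pow _ _ _ _)
    · exact (pow_dvd_pow_of_dvd (dvd_mul_right _ _) j).trans
        (pow_dvd_coeff_C_mul_X_add_C_pow _ _ _ _)
  · rw [coeff_C_mul_X_add_C_pow_of_lt _ _ hyj, mul_zero]
    exact dvd_zero _

end Polynomial

theorem stmt5_general (p : ℕ) [Fact p.Prime] (s : ℕ) (hs : 1 ≤ s)
    (a b c d : ℤ_[p])
    (n x y : ℕ) (hyn : y ≤ n) (A : ℤ_[p])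
    (hA : A = (((C ((p : ℤ_[p]) ^ s * c) * X + C d) ^ (n - y) *
      (C ((p : ℤ_[p]) * a) * X + C b) ^ y).coeff x)) :
    (n < x → A = 0) ∧
    (x ≤ n → ‖A‖ ≤ (p : ℝ) ^ (-((x + (s - 1) * (x - y) : ℕ) : ℤ))) := by
  subst hA
  refine ⟨fun hnx => coeff_linear_pow_mul_linear_pow_of_lt _ _ _ _ (by omega), fun _ => ?_⟩
  rw [PadicInt.norm_le_pow_iff_mem_span_pow, Ideal.mem_span_singleton]
  exact pow_dvd_coeff_linear_pow_mul_linear_pow _ _ _ _ _ hs _ _ _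

/-- Let `p` be a prime, `s ≥ 1` an integer, `a, d ∈ ℤ_p^×` units, `b, c ∈ ℤ_p`, and `n, x, y`
nonnegative integers with `y ≤ n`. Let `A` be the coefficient of `X^x` in
`(p^s·c·X + d)^(n−y) (p·a·X + b)^y`. If `x > n` then `A = 0`; otherwise the p-adic valuation
of `A` is at least `x + (s−1)·max(0, x − y)` (expressed via `‖A‖ ≤ p^{-(x + (s−1)(x−y))}`). -/
theorem stmt5 (p : ℕ) [Fact p.Prime] (s : ℕ) (hs : 1 ≤ s)
    (a b c d : ℤ_[p]) (ha : IsUnit a) (hd : IsUnit d)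
    (n x y : ℕ) (hyn : y ≤ n) (A : ℤ_[p])
    (hA : A = (((C ((p : ℤ_[p]) ^ s * c) * X + C d) ^ (n - y) *
      (C ((p : ℤ_[p]) * a) * X + C b) ^ y).coeff x)) :
    (n < x → A = 0) ∧
    (x ≤ n → ‖A‖ ≤ (p : ℝ) ^ (-((x + (s - 1) * (x - y) : ℕ) : ℤ))) :=
  stmt5_general p s hs a b c d n x y hyn A hA
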